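/- Under the assumptions of the previous oracle inequality with β = β* (i.e., (1/(nT))‖XᵀW‖_{2,∞} ≤ λ/2 and β̂ a group-Lasso minimizer with y = Xβ* + W), one has ‖(β̂ − β*)_{J^c}‖_{2,1} ≤ 3‖(β̂ − β*)_J‖_{2,1}, where J = J(β*) = {j : (β*)^j ≠ 0}. -/

import Mathlib

open scoped BigOperators Classical
open Matrix

noncomputable def blk {M T : ℕ} (β : Fin M × Fin T → ℝ) (j : Fin M) :
    EuclideanSpace ℝ (Fin T) := WithLp.toLp 2 (fun t => β (j, t))

noncomputable def norm21 {M T : ℕ} (β : Fin M × Fin T → ℝ) : ℝ := ∑ j, ‖blk β j‖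

noncomputable def norm2inf {M T : ℕ} (β : Fin M × Fin T → ℝ) : ℝ :=
  ‖(fun j => ‖blk β j‖ : Fin M → ℝ)‖

/-! With `Δ = βhat - βstar`, comparing the objective at `βhat` with its value at `βstar` gives
`‖XΔ‖² / (nT) ≤ 2 ⟨XᵀW, Δ⟩ / (nT) + 2λ (‖βstar‖_{2,1} - ‖βhat‖_{2,1})`.
By the duality of the `(2,∞)`- and `(2,1)`-norms the noise term is at most `λ ‖Δ‖_{2,1}`, and since
`βstar` vanishes off `J` the penalty difference is at most `2λ (‖Δ_J‖_{2,1} - ‖Δ_{Jᶜ}‖_{2,1})`.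
Dropping the nonnegative fit term leaves `0 ≤ λ (3 ‖Δ_J‖_{2,1} - ‖Δ_{Jᶜ}‖_{2,1})`. -/

theorem basic_inequality {m p : Type*} [Fintype m] [Fintype p] (X : Matrix m p ℝ)
    (βstar βhat : p → ℝ) (W y : m → ℝ) (hy : y = X *ᵥ βstar + W) (c : ℝ)
    (pen : (p → ℝ) → ℝ)
    (hmin : c * ∑ i, ((X *ᵥ βhat) i - y i) ^ 2 + pen βhat ≤
      c * ∑ i, ((X *ᵥ βstar) i - y i) ^ 2 + pen βstar) :
    c * ∑ i, (X *ᵥ (βhat - βstar)) i ^ 2 ≤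
      2 * c * ((Xᵀ *ᵥ W) ⬝ᵥ (βhat - βstar)) + pen βstar - pen βhat := by
  set v := X *ᵥ (βhat - βstar)
  have hres_hat : ∀ i, (X *ᵥ βhat) i - y i = v i - W i := fun i => by
    simp only [v, hy, mulVec_sub, Pi.sub_apply, Pi.add_apply]; ring
  have hres_star : ∀ i, (X *ᵥ βstar) i - y i = -W i := fun i => by
    simp only [hy, Pi.add_apply]; ring
  have hcross : (Xᵀ *ᵥ W) ⬝ᵥ (βhat - βstar) = ∑ i, v i * W i := by
    rw [mulVec_transpose, ← dotProduct_mulVec, dotProduct_comm]; rfl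
  have hexpand : ∑ i, (v i - W i) ^ 2 = ∑ i, v i ^ 2 - 2 * ∑ i, v i * W i + ∑ i, W i ^ 2 := by
    simp only [sub_sq, Finset.sum_add_distrib, Finset.sum_sub_distrib, Finset.mul_sum, mul_assoc]
  simp only [hres_hat, hres_star, neg_sq, hexpand] at hmin
  rw [hcross]
  linarith

section Blocks

variable {M T : ℕ}

theorem norm21_nonneg (β : Fin M × Fin T → ℝ) : 0 ≤ norm21 β :=
  Finset.sum_nonneg fun _ _ => norm_nonneg _

theorem norm_blk_le_norm2inf (β : Fin M × Fin T → ℝ) (j : Fin M) :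
    ‖blk β j‖ ≤ norm2inf β :=
  (norm_norm _).symm.le.trans (norm_le_pi_norm (fun j => ‖blk β j‖ : Fin M → ℝ) j)

theorem dotProduct_eq_sum_inner_blk (β γ : Fin M × Fin T → ℝ) :
    β ⬝ᵥ γ = ∑ j, inner ℝ (blk β j) (blk γ j) := by
  rw [dotProduct, Fintype.sum_prod_type]
  refine Finset.sum_congr rfl fun j _ => ?_
  simp only [PiLp.inner_apply, blk, RCLike.inner_apply, conj_trivial, mul_comm]

theorem dotProduct_le_norm2inf_mul_norm21 (β γ : Fin M × Fin T → ℝ) :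
    β ⬝ᵥ γ ≤ norm2inf β * norm21 γ := by
  rw [dotProduct_eq_sum_inner_blk, norm21, Finset.mul_sum]
  gcongr with j
  calc inner ℝ (blk β j) (blk γ j) ≤ ‖blk β j‖ * ‖blk γ j‖ := real_inner_le_norm _ _
    _ ≤ norm2inf β * ‖blk γ j‖ := by gcongr; exact norm_blk_le_norm2inf β j

end Blocks

/-- Decomposability of the group norm with respect to a support set `J` of `g`. -/
theorem sum_compl_norm_sub_le {ι E : Type*} [Fintype ι] [DecidableEq ι]
    [SeminormedAddCommGroup E]
    (f g : ι → E) (J : Finset ι) (hg : ∀ j ∉ J, g j = 0) :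
    ∑ j ∈ Jᶜ, ‖f j - g j‖ ≤ ∑ j ∈ J, ‖f j - g j‖ + (∑ j, ‖f j‖ - ∑ j, ‖g j‖) := by
  have hout : ∀ j ∈ Jᶜ, ‖f j - g j‖ = ‖f j‖ - ‖g j‖ := fun j hj => by
    rw [hg j (Finset.mem_compl.1 hj), sub_zero, norm_zero, sub_zero]
  have hin : ∀ j ∈ J, ‖g j‖ - ‖f j‖ ≤ ‖f j - g j‖ := fun j _ => by
    rw [norm_sub_rev]; exact norm_sub_norm_le _ _
  rw [Finset.sum_congr rfl hout, ← Finset.sum_add_sum_compl J fun j => ‖f j‖,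
    ← Finset.sum_add_sum_compl J fun j => ‖g j‖, Finset.sum_sub_distrib]
  have := Finset.sum_le_sum hin
  rw [Finset.sum_sub_distrib] at this
  linarith

theorem stmt_11_general (n T M : ℕ)
    (X : Matrix (Fin (n * T)) (Fin M × Fin T) ℝ)
    (βstar βhat : Fin M × Fin T → ℝ) (W : Fin (n * T) → ℝ)
    (y : Fin (n * T) → ℝ) (hy : y = X.mulVec βstar + W)
    (lam : ℝ) (hlam : 0 < lam)
    (hmin : ∀ β : Fin M × Fin T → ℝ,
        (1 / (n * T : ℝ)) * ∑ i, (X.mulVec βhat i - y i) ^ 2 +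
          2 * lam * norm21 βhat ≤
        (1 / (n * T : ℝ)) * ∑ i, (X.mulVec β i - y i) ^ 2 + 2 * lam * norm21 β)
    (hW : (1 / (n * T : ℝ)) * norm2inf (Xᵀ.mulVec W) ≤ lam / 2) :
    ∑ j ∈ (Finset.univ.filter (fun j => blk βstar j ≠ 0))ᶜ,
        ‖blk βhat j - blk βstar j‖ ≤
      3 * ∑ j ∈ Finset.univ.filter (fun j => blk βstar j ≠ 0),
        ‖blk βhat j - blk βstar j‖ := by
  set c : ℝ := 1 / (n * T : ℝ)
  set J := Finset.univ.filter (fun j => blk βstar j ≠ 0)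
  set A := ∑ j ∈ J, ‖blk βhat j - blk βstar j‖
  set B := ∑ j ∈ Jᶜ, ‖blk βhat j - blk βstar j‖
  have hsplit : norm21 (βhat - βstar) = A + B := (Finset.sum_add_sum_compl J _).symm
  have hdecomp : B ≤ A + (norm21 βhat - norm21 βstar) :=
    sum_compl_norm_sub_le (blk βhat) (blk βstar) J fun j hj => by simpa [J] using hj
  have hbasic := basic_inequality X βstar βhat W y hy c (fun β => 2 * lam * norm21 β) (hmin βstar)
  have hnoise : c * ((Xᵀ *ᵥ W) ⬝ᵥ (βhat - βstar)) ≤ lam / 2 * norm21 (βhat - βstar) :=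
    calc c * ((Xᵀ *ᵥ W) ⬝ᵥ (βhat - βstar)) ≤ c * norm2inf (Xᵀ *ᵥ W) * norm21 (βhat - βstar) := by
          rw [mul_assoc]; gcongr; exact dotProduct_le_norm2inf_mul_norm21 _ _
      _ ≤ lam / 2 * norm21 (βhat - βstar) := by gcongr; exact norm21_nonneg _
  have hfit : 0 ≤ c * ∑ i, (X *ᵥ (βhat - βstar)) i ^ 2 := by positivity
  have hcone : 0 ≤ lam * (3 * A - B) := by
    nlinarith [mul_le_mul_of_nonneg_left hdecomp hlam.le]
  linarith [(mul_nonneg_iff_of_pos_left hlam).1 hcone]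

theorem stmt_11 (n T M : ℕ) (hn : 0 < n) (hT : 0 < T)
    (X : Matrix (Fin (n * T)) (Fin M × Fin T) ℝ)
    (βstar βhat : Fin M × Fin T → ℝ) (W : Fin (n * T) → ℝ)
    (y : Fin (n * T) → ℝ) (hy : y = X.mulVec βstar + W)
    (lam : ℝ) (hlam : 0 < lam)
    (hmin : ∀ β : Fin M × Fin T → ℝ,
        (1 / (n * T : ℝ)) * ∑ i, (X.mulVec βhat i - y i) ^ 2 +
          2 * lam * norm21 βhat ≤
        (1 / (n * T : ℝ)) * ∑ i, (X.mulVec β i - y i) ^ 2 + 2 * lam * norm21 β)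
    (hW : (1 / (n * T : ℝ)) * norm2inf (Xᵀ.mulVec W) ≤ lam / 2) :
    ∑ j ∈ (Finset.univ.filter (fun j => blk βstar j ≠ 0))ᶜ,
        ‖blk βhat j - blk βstar j‖ ≤
      3 * ∑ j ∈ Finset.univ.filter (fun j => blk βstar j ≠ 0),
        ‖blk βhat j - blk βstar j‖ :=
  stmt_11_general n T M X βstar βhat W y hy lam hlam hmin hW
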